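/- arXiv:2204.09842 — 2 statements merged into one kernel-verified Lean document; each statement's English description precedes it below -/
import Mathlib

section
/- For every nonnegative integer t, the graph G' = K_{3+t} \vee ((3+2t)K_2 \cup 2K_1) (the join of a complete graph on 3+t vertices with the disjoint union of 3+2t copies of K_2 and two isolated vertices) is connected but is not a P_{\geq 3}-factor covered graph. -/
open SimpleGraph

section Defs

variable {V : Type*} {α β : Type*}

/-- A graph is *factor-critical* if deleting any vertex leaves a graph
with a perfect matching. -/
def FactorCritical (G : SimpleGraph V) : Prop :=
  ∀ v : V, ∃ M : (G.induce {u | u ≠ v}).Subgraph, M.IsPerfectMatching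

/-- A *sun* is `K₁`, `K₂`, or a graph obtained from a factor-critical graph `R`
with vertex set `Y = {y₁, …, yₙ}` by adding `n` new vertices `x₁, …, xₙ` and the
pendant edges `y₁x₁, …, yₙxₙ`. -/
def IsSun (G : SimpleGraph V) : Prop :=
  (Nat.card V = 1) ∨ (Nat.card V = 2 ∧ G.Connected) ∨
  (∃ Y : Set V, Y.Nonempty ∧ FactorCritical (G.induce Y) ∧
    ∃ f : (Yᶜ : Set V) ≃ Y, ∀ x : (Yᶜ : Set V), G.neighborSet ↑x = {(↑(f x) : V)})

/-- `sunCount G` is the number of connected components of `G` that are suns. -/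
noncomputable def sunCount (G : SimpleGraph V) : ℕ :=
  Nat.card {c : G.ConnectedComponent // IsSun (G.induce c.supp)}

/-- Number of isolated vertices of a graph. -/
noncomputable def isolatedCount (G : SimpleGraph V) : ℕ :=
  {v : V | ∀ w : V, ¬ G.Adj v w}.ncard

/-- A set of vertices is independent if no two of its vertices are adjacent. -/
def IndepSet (G : SimpleGraph V) (A : Set V) : Prop :=
  A.Pairwise fun u v => ¬ G.Adj u v

/-- The independence number of a graph: the maximum size of an independent set. -/
noncomputable def indepNum (G : SimpleGraph V) : ℕ :=
  sSup {n | ∃ A : Set V, IndepSet G A ∧ A.ncard = n}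

/-- The neighborhood `N_G(A)` of a set `A` of vertices: the union of the
neighborhoods of the vertices of `A`. -/
def neighborSetOf (G : SimpleGraph V) (A : Set V) : Set V :=
  {v | ∃ a ∈ A, G.Adj a v}

/-- `H` is a `P_{≥3}`-factor of `G`: a spanning subgraph of `G` each of whose
connected components is a path on at least `3` vertices. -/
def IsPathFactor (G H : SimpleGraph V) : Prop :=
  H ≤ G ∧ ∀ c : H.ConnectedComponent,
    ∃ n : ℕ, 3 ≤ n ∧ Nonempty ((H.induce c.supp) ≃g pathGraph n)

/-- A connected graph `G` is a `P_{≥3}`-factor covered graph if every edge of `G`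
is contained in some `P_{≥3}`-factor of `G`. -/
def PathFactorCovered (G : SimpleGraph V) : Prop :=
  G.Connected ∧ ∀ e ∈ G.edgeSet, ∃ H : SimpleGraph V, IsPathFactor G H ∧ e ∈ H.edgeSet

/-- A graph `G` is a `P_{≥3}`-factor uniform graph if `G - e` is a
`P_{≥3}`-factor covered graph for every edge `e` of `G`. -/
def PathFactorUniform (G : SimpleGraph V) : Prop :=
  ∀ e ∈ G.edgeSet, PathFactorCovered (G.deleteEdges {e})

/-- The parameter `ε(X)` from Zhou–Zhang's characterization of
`P_{≥3}`-factor covered graphs. -/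
noncomputable def eps (G : SimpleGraph V) (X : Set V) : ℕ := by
  classical
  exact if ¬ IndepSet G X then 2
    else if X.Nonempty ∧ ∃ c : (G.induce Xᶜ).ConnectedComponent,
        ¬ IsSun ((G.induce Xᶜ).induce c.supp) then 1
    else 0

/-- A graph is 2-edge-connected if it is connected and stays connected after
the deletion of any single edge. -/
def TwoEdgeConnected (G : SimpleGraph V) : Prop :=
  G.Connected ∧ ∀ e ∈ G.edgeSet, (G.deleteEdges {e}).Connected

/-- A graph is `k`-connected if it has more than `k` vertices and remains
connected after deleting any fewer than `k` vertices. -/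
def KConnected [Fintype V] (k : ℕ) (G : SimpleGraph V) : Prop :=
  k < Fintype.card V ∧ ∀ S : Set V, S.ncard < k → (G.induce Sᶜ).Connected

/-- The join `G₁ ∨ G₂` of two graphs: take disjoint copies of `G₁` and `G₂`
and add all edges between them. -/
def graphJoin (G : SimpleGraph α) (H : SimpleGraph β) : SimpleGraph (α ⊕ β) where
  Adj x y :=
    match x, y with
    | Sum.inl a, Sum.inl b => G.Adj a b
    | Sum.inr a, Sum.inr b => H.Adj a b
    | Sum.inl _, Sum.inr _ => True
    | Sum.inr _, Sum.inl _ => True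
  symm := ⟨by
    rintro (a | a) (b | b) h
    · exact G.adj_symm h
    · trivial
    · trivial
    · exact H.adj_symm h⟩
  loopless := ⟨by
    rintro (a | a) h
    · exact G.irrefl h
    · exact H.irrefl h⟩

/-- The disjoint union of two graphs. -/
def graphSum (G : SimpleGraph α) (H : SimpleGraph β) : SimpleGraph (α ⊕ β) where
  Adj x y :=
    match x, y with
    | Sum.inl a, Sum.inl b => G.Adj a b
    | Sum.inr a, Sum.inr b => H.Adj a b
    | _, _ => False
  symm := ⟨by
    rintro (a | a) (b | b) h
    · exact G.adj_symm h
    · exact h.elim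
    · exact h.elim
    · exact H.adj_symm h⟩
  loopless := ⟨by
    rintro (a | a) h
    · exact G.irrefl h
    · exact H.irrefl h⟩

/-- `mK2 m` is the disjoint union of `m` copies of `K₂`. -/
def mK2 (m : ℕ) : SimpleGraph (Fin m × Fin 2) where
  Adj p q := p.1 = q.1 ∧ p.2 ≠ q.2
  symm := ⟨by rintro p q ⟨h1, h2⟩; exact ⟨h1.symm, h2.symm⟩⟩
  loopless := ⟨by rintro p ⟨h1, h2⟩; exact h2 rfl⟩

end Defs

/-! In a `P_{≥3}`-factor `H` every vertex has degree at most `2`, and no nonempty set of fewer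
than three vertices is a union of components of `H`. Let `A` be the clique `K_{3+t}` and suppose
`H` uses an edge inside `A`. Each of the `5 + 2t` pieces of `G' - A` (the copies of `K₂` and the
isolated vertices) is left in `G'` only towards `A`, so it sends an `H`-edge to `A`, and these
edges have distinct ends outside `A`. But at most `2|A| - 2 = 4 + 2t` `H`-edges leave `A`: every
vertex of `A` has degree at most `2`, and each end of the edge inside `A` uses one of its two
edges there. -/

open Finset Function

variable {V α β ι : Type*}

theorem graphJoin_connected [Nonempty α] [Nonempty β] (K : SimpleGraph α) (F : SimpleGraph β) :
    (graphJoin K F).Connected := by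
  obtain ⟨a₀⟩ := ‹Nonempty α›
  obtain ⟨b₀⟩ := ‹Nonempty β›
  have hcross : ∀ a b, (graphJoin K F).Adj (.inl a) (.inr b) := fun _ _ => trivial
  refine (connected_iff_exists_forall_reachable _).mpr ⟨.inl a₀, ?_⟩
  rintro (a | b)
  · exact (hcross a₀ b₀).reachable.trans (hcross a b₀).symm.reachable
  · exact (hcross a₀ b).reachable

theorem sum_card_neighborFinset_filter_notMem_add_two_le [Fintype V] [DecidableEq V]
    {H : SimpleGraph V} [DecidableRel H.Adj] (hdeg : ∀ v, H.degree v ≤ 2) {A : Finset V}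
    {a b : V} (ha : a ∈ A) (hb : b ∈ A) (hab : H.Adj a b) :
    ∑ x ∈ A, #{y ∈ H.neighborFinset x | y ∉ A} + 2 ≤ 2 * #A := by
  have hinside : 2 ≤ ∑ x ∈ A, #{y ∈ H.neighborFinset x | y ∈ A} :=
    calc 2 ≤ #{y ∈ H.neighborFinset a | y ∈ A} + #{y ∈ H.neighborFinset b | y ∈ A} := by
          have : 0 < #{y ∈ H.neighborFinset a | y ∈ A} :=
            card_pos.mpr ⟨b, mem_filter.mpr ⟨(mem_neighborFinset _ _ _).mpr hab, hb⟩⟩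
          have : 0 < #{y ∈ H.neighborFinset b | y ∈ A} :=
            card_pos.mpr ⟨a, mem_filter.mpr ⟨(mem_neighborFinset _ _ _).mpr hab.symm, ha⟩⟩
          omega
      _ = ∑ x ∈ {a, b}, #{y ∈ H.neighborFinset x | y ∈ A} := by rw [sum_pair hab.ne]
      _ ≤ _ := sum_le_sum_of_subset (insert_subset ha (singleton_subset_iff.mpr hb))
  have htotal : ∑ x ∈ A, (#{y ∈ H.neighborFinset x | y ∈ A} +
      #{y ∈ H.neighborFinset x | y ∉ A}) ≤ 2 * #A := by
    simpa only [card_filter_add_card_filter_not, card_neighborFinset_eq_degree,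
      smul_eq_mul, mul_comm] using sum_le_card_nsmul A _ 2 fun v _ => hdeg v
  rw [sum_add_distrib] at htotal
  omega

namespace IsPathFactor

variable {G H : SimpleGraph V}

theorem degree_le_two (hH : IsPathFactor G H) (v : V) [Fintype (H.neighborSet v)] :
    H.degree v ≤ 2 := by
  by_contra! h
  obtain ⟨w₁, h₁, w₂, h₂, w₃, h₃, h₁₂, h₁₃, h₂₃⟩ := Finset.two_lt_card.mp h
  rw [mem_neighborFinset] at h₁ h₂ h₃
  obtain ⟨n, -, ⟨φ⟩⟩ := hH.2 (H.connectedComponentMk v)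
  have hmem : ∀ {w}, H.Adj v w → w ∈ (H.connectedComponentMk v).supp :=
    fun h => ConnectedComponent.sound h.symm.reachable
  have hpath : ∀ {w} (h : H.Adj v w),
      (φ ⟨w, hmem h⟩ : ℕ) + 1 = φ ⟨v, rfl⟩ ∨ (φ ⟨v, rfl⟩ : ℕ) + 1 = φ ⟨w, hmem h⟩ :=
    fun {w} h => pathGraph_adj.mp <|
      (φ.map_adj_iff (v := ⟨w, hmem h⟩) (w := ⟨v, rfl⟩)).mpr h.symm
  have hinj : ∀ {w w'} (h : H.Adj v w) (h' : H.Adj v w'), w ≠ w' →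
      (φ ⟨w, hmem h⟩ : ℕ) ≠ φ ⟨w', hmem h'⟩ :=
    fun _ _ hne hval => hne (congrArg Subtype.val (φ.injective (Fin.val_injective hval)))
  have := hpath h₁; have := hpath h₂; have := hpath h₃
  have := hinj h₁ h₂ h₁₂; have := hinj h₁ h₃ h₁₃; have := hinj h₂ h₃ h₂₃
  omega

theorem exists_adj_notMem (hH : IsPathFactor G H) {S : Finset V} (hS : S.Nonempty)
    (hcard : #S < 3) : ∃ u ∈ S, ∃ w ∉ S, H.Adj u w := by
  obtain ⟨u, hu⟩ := hS
  obtain ⟨n, hn, ⟨φ⟩⟩ := hH.2 (H.connectedComponentMk u)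
  have hsupp : ¬ (H.connectedComponentMk u).supp ⊆ S := fun hsub => by
    have := Set.ncard_le_ncard hsub S.finite_toSet
    rw [Set.ncard_coe_finset, ← Nat.card_coe_set_eq, Nat.card_congr φ.toEquiv,
      Nat.card_eq_fintype_card, Fintype.card_fin] at this
    omega
  obtain ⟨w, hw, hwS⟩ := Set.not_subset.mp hsupp
  obtain ⟨p⟩ := ConnectedComponent.exact hw.symm
  obtain ⟨d, -, hd₁, hd₂⟩ := p.exists_boundary_dart S hu hwS
  exact ⟨d.fst, hd₁, d.snd, hd₂, d.adj⟩

theorem card_add_two_le_two_mul_card [Fintype V] [DecidableEq V] [Fintype ι]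
    (hH : IsPathFactor G H) (A : Finset V) (C : ι → Finset V) (hdisj : Pairwise (Disjoint on C))
    (hCA : ∀ i, Disjoint (C i) A) (hne : ∀ i, (C i).Nonempty) (hsmall : ∀ i, #(C i) < 3)
    (hclosed : ∀ i, ∀ u ∈ C i, ∀ w ∉ A, G.Adj u w → w ∈ C i) {a b : V} (ha : a ∈ A)
    (hb : b ∈ A) (hab : H.Adj a b) :
    Fintype.card ι + 2 ≤ 2 * #A := by
  classical
  have hcross : ∀ i, ∃ y ∈ C i, ∃ x ∈ A, H.Adj x y := fun i => by
    obtain ⟨u, hu, w, hw, huw⟩ := hH.exists_adj_notMem (hne i) (hsmall i)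
    have hwA : w ∈ A := by_contra fun h => hw (hclosed i u hu w h (hH.1 huw))
    exact ⟨u, hu, w, hwA, huw.symm⟩
  choose y hy x hx hxy using hcross
  have hinj : Injective y := fun i j h => by_contra fun hij =>
    disjoint_left.mp (hdisj hij) (hy i) (h ▸ hy j)
  calc Fintype.card ι + 2 = #(univ.image y) + 2 := by
        rw [card_image_of_injective _ hinj, card_univ]
    _ ≤ #(A.biUnion fun x => {z ∈ H.neighborFinset x | z ∉ A}) + 2 := by
        gcongr
        intro z hz
        obtain ⟨i, -, rfl⟩ := mem_image.mp hz
        exact mem_biUnion.mpr ⟨x i, hx i, mem_filter.mpr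
          ⟨(mem_neighborFinset _ _ _).mpr (hxy i), disjoint_left.mp (hCA i) (hy i)⟩⟩
    _ ≤ ∑ x ∈ A, #{z ∈ H.neighborFinset x | z ∉ A} + 2 := by gcongr; exact card_biUnion_le
    _ ≤ 2 * #A :=
        sum_card_neighborFinset_filter_notMem_add_two_le (fun v => hH.degree_le_two v) ha hb hab

theorem card_add_two_le_two_mul_card_of_graphJoin [Fintype α] [Fintype β] [Fintype ι]
    [DecidableEq ι] {K : SimpleGraph α} {F : SimpleGraph β} {H : SimpleGraph (α ⊕ β)}
    (hH : IsPathFactor (graphJoin K F) H) (π : β → ι) (hπ : Surjective π)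
    (hπadj : ∀ u w, F.Adj u w → π u = π w) (hfiber : ∀ i, #{b | π b = i} < 3)
    {a b : α} (hab : H.Adj (.inl a) (.inl b)) :
    Fintype.card ι + 2 ≤ 2 * Fintype.card α := by
  classical
  have key := hH.card_add_two_le_two_mul_card (univ.map .inl)
    (fun i => (univ.filter (π · = i)).map .inr) ?disj ?outside ?nonempty
    (fun i => by simpa using hfiber i) ?closed
    (mem_map_of_mem _ (mem_univ a)) (mem_map_of_mem _ (mem_univ b)) hab
  · simpa using key
  case disj =>
    intro i j hij
    simp only [onFun, Finset.disjoint_left, mem_map, mem_filter, mem_univ, true_and]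
    rintro _ ⟨b, rfl, rfl⟩ ⟨b', hb', hbb'⟩
    exact hij (Sum.inr_injective hbb' ▸ hb')
  case outside =>
    intro i
    simp [Finset.disjoint_left]
  case nonempty =>
    intro i
    obtain ⟨b, rfl⟩ := hπ i
    exact ⟨.inr b, mem_map_of_mem _ (by simp)⟩
  case closed =>
    rintro i _ hu (w | w) hw huw
    · exact absurd (mem_map_of_mem _ (mem_univ w)) hw
    · obtain ⟨u, hfib, rfl⟩ := mem_map.mp hu
      exact mem_map_of_mem _
        (mem_filter.mpr ⟨mem_univ w, (hπadj u w huw).symm.trans (mem_filter.mp hfib).2⟩)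

end IsPathFactor

section PiecesOfGraphSumMK2

variable {m : ℕ} {γ : Type*}

theorem graphSum_mK2_bot_map_fst_eq_of_adj {u w : Fin m × Fin 2 ⊕ γ}
    (h : (graphSum (mK2 m) (⊥ : SimpleGraph γ)).Adj u w) :
    Sum.map Prod.fst id u = Sum.map Prod.fst id w := by
  rcases u with u | u <;> rcases w with w | w
  · exact congrArg Sum.inl h.1
  all_goals exact h.elim

theorem card_filter_map_fst_eq_lt_three [Fintype γ] [DecidableEq γ] (k : Fin m ⊕ γ) :
    #{x : Fin m × Fin 2 ⊕ γ | Sum.map Prod.fst id x = k} < 3 := by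
  rcases k with i | j
  · calc #{x : Fin m × Fin 2 ⊕ γ | Sum.map Prod.fst id x = .inl i}
        ≤ #(univ.image fun b : Fin 2 => (.inl (i, b) : Fin m × Fin 2 ⊕ γ)) := by
          refine card_le_card fun x hx => ?_
          rcases x with ⟨i', b⟩ | j <;> simp_all
      _ < 3 := card_image_le.trans_lt (by simp)
  · calc #{x : Fin m × Fin 2 ⊕ γ | Sum.map Prod.fst id x = .inr j}
        ≤ #{(.inr j : Fin m × Fin 2 ⊕ γ)} := by
          refine card_le_card fun x hx => ?_
          rcases x with ⟨i', b⟩ | j <;> simp_all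
      _ < 3 := by simp

end PiecesOfGraphSumMK2

/-- **Remark 1 (continued).** For every `t ≥ 0`, the graph
`G' = K_{3+t} ∨ ((3+2t)K₂ ∪ 2K₁)` is connected but is not a `P_{≥3}`-factor
covered graph. -/
theorem stmt5 (t : ℕ) :
    letI G' := graphJoin (completeGraph (Fin (3 + t)))
      (graphSum (mK2 (3 + 2 * t)) (⊥ : SimpleGraph (Fin 2)))
    G'.Connected ∧ ¬ PathFactorCovered G' := by
  refine ⟨graphJoin_connected _ _, ?_⟩
  rintro ⟨-, hcov⟩
  obtain ⟨H, hH, hedge⟩ :=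
    hcov s(.inl ⟨0, by omega⟩, .inl ⟨1, by omega⟩) (by simp [graphJoin])
  have := hH.card_add_two_le_two_mul_card_of_graphJoin (Sum.map Prod.fst id)
    (Sum.map_surjective.mpr ⟨Prod.fst_surjective, surjective_id⟩)
    (fun _ _ => graphSum_mK2_bot_map_fst_eq_of_adj) card_filter_map_fst_eq_lt_three hedge
  simp only [Fintype.card_sum, Fintype.card_fin] at this
  omega
end

section
/- Let G be a 2-edge-connected graph with \delta(G) > (\alpha(G) + 4)/2, let e be an edge of G and let G' = G - e. If X is a vertex subset of G' satisfying sun(G' - X) \geq 2|X| - \varepsilon(X) + 1, then X is nonempty. -/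
open SimpleGraph

/-!
For `X = ∅` we have `ε(X) = 0`, so `G - e` has a sun component. Every sun has a vertex of degree
at most one, so `G` has a vertex of degree at most two. Since `α(G) ≥ 1`, this contradicts
`δ(G) > (α(G) + 4) / 2 ≥ 5 / 2`.
-/

namespace SimpleGraph

variable {W : Type*}

lemma ncard_neighborSet_induce_of_subset {H : SimpleGraph W} {s : Set W} {v : s}
    (hv : H.neighborSet v ⊆ s) :
    ((H.induce s).neighborSet v).ncard = (H.neighborSet v).ncard := by
  have hpre : (H.induce s).neighborSet v = Subtype.val ⁻¹' H.neighborSet v := rfl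
  rw [hpre, Set.ncard_preimage_of_injective_subset_range Subtype.val_injective
    (by rwa [Subtype.range_coe])]

lemma ncard_neighborSet_le_deleteEdges_add_one [Finite W] (G : SimpleGraph W) (e : Sym2 W)
    (v : W) :
    (G.neighborSet v).ncard ≤ ((G.deleteEdges {e}).neighborSet v).ncard + 1 := by
  have hdeleted : {w | s(v, w) = e}.Subsingleton := fun w₁ h₁ w₂ h₂ ↦
    Sym2.congr_right.mp (h₁.trans h₂.symm)
  calc (G.neighborSet v).ncard
      ≤ ((G.deleteEdges {e}).neighborSet v ∪ {w | s(v, w) = e}).ncard := by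
        refine Set.ncard_le_ncard fun w hw ↦ ?_
        by_cases hvw : s(v, w) = e
        · exact Or.inr hvw
        · exact Or.inl ⟨hw, fun h ↦ hvw h.1⟩
    _ ≤ ((G.deleteEdges {e}).neighborSet v).ncard + {w | s(v, w) = e}.ncard :=
        Set.ncard_union_le _ _
    _ ≤ ((G.deleteEdges {e}).neighborSet v).ncard + 1 := by
        have := hdeleted.finite.to_subtype
        gcongr
        exact Set.ncard_le_one_iff_subsingleton.mpr hdeleted

lemma minDegree_le_ncard_neighborSet [Fintype W] (G : SimpleGraph W) [DecidableRel G.Adj]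
    (v : W) : G.minDegree ≤ (G.neighborSet v).ncard := by
  rw [Set.ncard_eq_toFinset_card', Set.toFinset_card, card_neighborSet_eq_degree]
  exact G.minDegree_le_degree v

end SimpleGraph

section Suns

variable {W : Type*}

lemma IsSun.exists_ncard_neighborSet_le_one {H : SimpleGraph W} (hs : IsSun H) :
    ∃ v, (H.neighborSet v).ncard ≤ 1 := by
  rcases hs with hone | ⟨htwo, -⟩ | ⟨Y, ⟨y, hy⟩, -, f, hf⟩
  · obtain ⟨_, ⟨v⟩⟩ := Nat.card_eq_one_iff_unique.mp hone
    exact ⟨v, Set.ncard_le_one_of_subsingleton _⟩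
  · have : Finite W := Nat.finite_of_card_ne_zero (by omega)
    obtain ⟨v⟩ : Nonempty W := Nat.card_pos_iff.mp (by omega) |>.1
    refine ⟨v, ?_⟩
    calc (H.neighborSet v).ncard ≤ ({v}ᶜ : Set W).ncard :=
          Set.ncard_le_ncard fun w hw ↦ (H.ne_of_adj hw).symm
      _ = 1 := by rw [Set.ncard_compl, htwo, Set.ncard_singleton]
  · refine ⟨f.symm ⟨y, hy⟩, ?_⟩
    rw [hf, Set.ncard_singleton]

lemma exists_ncard_neighborSet_le_one_of_sunCount_pos {H : SimpleGraph W}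
    (h : 0 < sunCount H) : ∃ v, (H.neighborSet v).ncard ≤ 1 := by
  obtain ⟨⟨c, hc⟩⟩ := (Nat.card_pos_iff.mp h).1
  obtain ⟨v, hv⟩ := hc.exists_ncard_neighborSet_le_one
  refine ⟨v, ?_⟩
  rwa [ncard_neighborSet_induce_of_subset fun w ↦ c.mem_supp_of_adj_mem_supp v.2] at hv

lemma one_le_indepNum [Finite W] [Nonempty W] (G : SimpleGraph W) : 1 ≤ _root_.indepNum G := by
  obtain ⟨v⟩ := ‹Nonempty W›
  refine le_csSup ⟨Nat.card W, ?_⟩ ⟨{v}, Set.pairwise_singleton _ _, Set.ncard_singleton v⟩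
  rintro n ⟨A, -, rfl⟩
  exact Set.ncard_le_card A

lemma eps_empty (G : SimpleGraph W) : eps G ∅ = 0 := by
  simp [eps, IndepSet]

end Suns

theorem stmt8_general {V : Type*} [Fintype V] (G : SimpleGraph V) [DecidableRel G.Adj]
    (hdeg : (G.minDegree : ℝ) > ((_root_.indepNum G : ℝ) + 4) / 2)
    (e : Sym2 V) (X : Set V)
    (hX : (sunCount ((G.deleteEdges {e}).induce Xᶜ) : ℤ) ≥
      2 * X.ncard - eps (G.deleteEdges {e}) X + 1) :
    X.Nonempty := by
  rw [Set.nonempty_iff_ne_empty]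
  rintro rfl
  have hsun : 0 < sunCount ((G.deleteEdges {e}).induce (∅ : Set V)ᶜ) := by
    simp only [Set.ncard_empty, eps_empty] at hX
    omega
  obtain ⟨v, hv⟩ := exists_ncard_neighborSet_le_one_of_sunCount_pos hsun
  rw [ncard_neighborSet_induce_of_subset (by simp)] at hv
  have hmin : G.minDegree ≤ 2 :=
    (G.minDegree_le_ncard_neighborSet v).trans
      ((G.ncard_neighborSet_le_deleteEdges_add_one e v).trans (by omega))
  have : Nonempty V := ⟨v⟩
  have hind : (1 : ℝ) ≤ _root_.indepNum G := by exact_mod_cast one_le_indepNum G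
  have hmin' : (G.minDegree : ℝ) ≤ 2 := by exact_mod_cast hmin
  linarith

/-- **Claim 1 in the proof of Theorem 1.3.** Let `G` be 2-edge-connected with
`δ(G) > (α(G)+4)/2`, let `e ∈ E(G)` and `G' = G - e`. If `X ⊆ V(G')` satisfies
`sun(G' - X) ≥ 2|X| - ε(X) + 1`, then `X ≠ ∅`. -/
theorem stmt8 {V : Type*} [Fintype V] (G : SimpleGraph V) [DecidableRel G.Adj]
    (h2ec : TwoEdgeConnected G)
    (hdeg : (G.minDegree : ℝ) > ((_root_.indepNum G : ℝ) + 4) / 2)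
    (e : Sym2 V) (he : e ∈ G.edgeSet) (X : Set V)
    (hX : (sunCount ((G.deleteEdges {e}).induce Xᶜ) : ℤ) ≥
      2 * X.ncard - eps (G.deleteEdges {e}) X + 1) :
    X.Nonempty :=
  stmt8_general G hdeg e X hX
end
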